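/- arXiv:2110.08572 — 2 statements merged into one kernel-verified Lean document; each statement's English description precedes it below -/
import Mathlib

section
/- Let n ≥ 1 be an integer, A, B ∈ ℝ^{n×n}, and let μ be a probability measure on ℝⁿ with μ({0}) = 0 such that for all indices i, j ∈ {1,…,n}, ∫ (u_i u_j / ‖u‖²) dμ(u) equals 1/n if i = j and 0 otherwise (isotropic normalized second moment). Then ∫ ‖Broyd(B, A, u) − A‖_F² dμ(u) = (1 − 1/n) ‖B − A‖_F². -/
open Matrix

noncomputable def vecNorm {n : ℕ} (u : Fin n → ℝ) : ℝ := Real.sqrt (∑ i, u i ^ 2)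

noncomputable def frobNorm {n : ℕ} (M : Matrix (Fin n) (Fin n) ℝ) : ℝ :=
  Real.sqrt (∑ i, ∑ j, M i j ^ 2)

noncomputable def specNorm {n : ℕ} (M : Matrix (Fin n) (Fin n) ℝ) : ℝ :=
  sSup {r : ℝ | ∃ u : Fin n → ℝ, vecNorm u = 1 ∧ r = vecNorm (M.mulVec u)}

noncomputable def broyd {n : ℕ} (B A : Matrix (Fin n) (Fin n) ℝ) (u : Fin n → ℝ) :
    Matrix (Fin n) (Fin n) ℝ :=
  B + (∑ i, u i ^ 2)⁻¹ • ((A - B) * Matrix.vecMulVec u u)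

noncomputable def matCLM {n : ℕ} (M : Matrix (Fin n) (Fin n) ℝ) :
    (Fin n → ℝ) →L[ℝ] (Fin n → ℝ) :=
  LinearMap.toContinuousLinearMap M.mulVecLin

/-! With `C = B - A` and `P = u uᵀ / ‖u‖²`, the error after the update is `C (I - P)`, whose
squared Frobenius norm is `‖C‖² - tr (Cᵀ C P)` because `P` is an orthogonal projection. The
isotropy hypothesis says exactly that `𝔼 P = I / n`, so by linearity the expectation is
`‖C‖² - tr (Cᵀ C) / n = (1 - 1/n) ‖C‖²`. -/

section SumOfSquares

variable {m n : Type*} [Fintype m] [Fintype n]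

theorem sum_sq_mulVec (C : Matrix m n ℝ) (u : n → ℝ) :
    ∑ i, (C *ᵥ u) i ^ 2 = ∑ k, ∑ l, (Cᵀ * C) k l * (u k * u l) := by
  have hgram : ∑ i, (C *ᵥ u) i ^ 2 = u ⬝ᵥ (Cᵀ * C) *ᵥ u := by
    rw [← mulVec_mulVec, dotProduct_mulVec, vecMul_transpose]
    simp only [dotProduct, sq]
  rw [hgram]
  simp only [dotProduct, mulVec, Finset.mul_sum]
  exact Finset.sum_congr rfl fun k _ => Finset.sum_congr rfl fun l _ => by ring

theorem sum_sq_sub_smul_mul_vecMulVec (C : Matrix m n ℝ) (u : n → ℝ) :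
    ∑ i, ∑ j, (C - (∑ k, u k ^ 2)⁻¹ • (C * vecMulVec u u)) i j ^ 2
      = ∑ i, ∑ j, C i j ^ 2 - (∑ i, (C *ᵥ u) i ^ 2) / ∑ k, u k ^ 2 := by
  set s := ∑ k, u k ^ 2
  -- also true for `s = 0`, where `s⁻¹ = 0`
  have hs : s⁻¹ ^ 2 * s = s⁻¹ := by
    rcases eq_or_ne s 0 with h | h
    · simp [h]
    · field_simp
  have hrow : ∀ i, ∑ j, (C i j - s⁻¹ * ((C *ᵥ u) i * u j)) ^ 2
      = ∑ j, C i j ^ 2 - s⁻¹ * (C *ᵥ u) i ^ 2 := by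
    intro i
    have hexpand : ∑ j, (C i j - s⁻¹ * ((C *ᵥ u) i * u j)) ^ 2
        = ∑ j, C i j ^ 2 - 2 * s⁻¹ * (C *ᵥ u) i * ∑ j, C i j * u j
          + s⁻¹ ^ 2 * (C *ᵥ u) i ^ 2 * s := by
      simp only [s, Finset.mul_sum, ← Finset.sum_sub_distrib, ← Finset.sum_add_distrib]
      exact Finset.sum_congr rfl fun j _ => by ring
    rw [hexpand, show ∑ j, C i j * u j = (C *ᵥ u) i from rfl]
    linear_combination (C *ᵥ u) i ^ 2 * hs
  simp only [mul_vecMulVec, Matrix.sub_apply, Matrix.smul_apply, vecMulVec_apply, smul_eq_mul,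
    hrow, Finset.sum_sub_distrib, ← Finset.mul_sum]
  ring

theorem trace_transpose_mul_self (C : Matrix m n ℝ) :
    trace (Cᵀ * C) = ∑ i, ∑ j, C i j ^ 2 := by
  simp only [trace, diag, mul_apply, transpose_apply, sq]
  exact Finset.sum_comm

end SumOfSquares

section IsotropicExpectation

open MeasureTheory

variable {n : Type*} [Fintype n]

theorem integrable_mul_div_sum_sq (μ : Measure (n → ℝ)) [IsFiniteMeasure μ] (k l : n) :
    Integrable (fun u : n → ℝ => u k * u l / ∑ j, u j ^ 2) μ := by
  refine Integrable.mono' (integrable_const 1) (Measurable.aestronglyMeasurable (by fun_prop))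
    (ae_of_all _ fun u => ?_)
  have hsum : ∀ i, u i ^ 2 ≤ ∑ j, u j ^ 2 := fun i =>
    Finset.single_le_sum (fun j _ => sq_nonneg (u j)) (Finset.mem_univ i)
  have hnonneg : 0 ≤ ∑ j, u j ^ 2 := Finset.sum_nonneg fun j _ => sq_nonneg (u j)
  rw [Real.norm_eq_abs, abs_div, abs_of_nonneg hnonneg]
  refine div_le_one_of_le₀ (abs_le.2 ⟨?_, ?_⟩) hnonneg <;>
    nlinarith [hsum k, hsum l, sq_nonneg (u k - u l), sq_nonneg (u k + u l)]

theorem integrable_sum_mul_mul_div_sum_sq (μ : Measure (n → ℝ)) [IsFiniteMeasure μ]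
    (G : Matrix n n ℝ) :
    Integrable (fun u : n → ℝ => ∑ k, ∑ l, G k l * (u k * u l / ∑ j, u j ^ 2)) μ :=
  integrable_finsetSum _ fun k _ => integrable_finsetSum _ fun l _ =>
    (integrable_mul_div_sum_sq μ k l).const_mul _

theorem integral_sum_mul_mul_div_sum_sq [DecidableEq n] (μ : Measure (n → ℝ))
    [IsFiniteMeasure μ] (G : Matrix n n ℝ) (c : ℝ)
    (hiso : ∀ k l, ∫ u, u k * u l / ∑ j, u j ^ 2 ∂μ = if k = l then c else 0) :
    ∫ u, ∑ k, ∑ l, G k l * (u k * u l / ∑ j, u j ^ 2) ∂μ = c * trace G := by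
  have hint : ∀ k l, Integrable (fun u : n → ℝ => G k l * (u k * u l / ∑ j, u j ^ 2)) μ :=
    fun k l => (integrable_mul_div_sum_sq μ k l).const_mul _
  rw [integral_finsetSum _ fun k _ => integrable_finsetSum _ fun l _ => hint k l]
  simp_rw [integral_finsetSum _ fun l _ => hint _ l, integral_const_mul, hiso]
  simp [trace, Finset.mul_sum, mul_comm]

end IsotropicExpectation

theorem frobNorm_sq {n : ℕ} (M : Matrix (Fin n) (Fin n) ℝ) :
    frobNorm M ^ 2 = ∑ i, ∑ j, M i j ^ 2 :=
  Real.sq_sqrt (Finset.sum_nonneg fun _ _ => Finset.sum_nonneg fun _ _ => sq_nonneg _)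

theorem broyd_sub {n : ℕ} (B A : Matrix (Fin n) (Fin n) ℝ) (u : Fin n → ℝ) :
    broyd B A u - A = (B - A) - (∑ i, u i ^ 2)⁻¹ • ((B - A) * vecMulVec u u) := by
  rw [broyd, ← neg_sub B A, Matrix.neg_mul, smul_neg]
  abel

theorem frobNorm_sq_broyd_sub {n : ℕ} (B A : Matrix (Fin n) (Fin n) ℝ) (u : Fin n → ℝ) :
    frobNorm (broyd B A u - A) ^ 2 = frobNorm (B - A) ^ 2
      - ∑ k, ∑ l, ((B - A)ᵀ * (B - A)) k l * (u k * u l / ∑ j, u j ^ 2) := by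
  rw [broyd_sub, frobNorm_sq, frobNorm_sq, sum_sq_sub_smul_mul_vecMulVec, sum_sq_mulVec]
  simp only [Finset.sum_div, mul_div_assoc]

open MeasureTheory in
theorem random_broyden_progress_expectation_general {n : ℕ}
    (A B : Matrix (Fin n) (Fin n) ℝ)
    (μ : Measure (Fin n → ℝ)) [IsProbabilityMeasure μ]
    (hiso : ∀ i j : Fin n,
      (∫ u : Fin n → ℝ, (u i * u j) / (∑ k, u k ^ 2) ∂μ)
        = if i = j then 1 / (n : ℝ) else 0) :
    (∫ u : Fin n → ℝ, frobNorm (broyd B A u - A) ^ 2 ∂μ)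
      = (1 - 1 / (n : ℝ)) * frobNorm (B - A) ^ 2 := by
  simp only [frobNorm_sq_broyd_sub]
  rw [integral_sub (integrable_const _) (integrable_sum_mul_mul_div_sum_sq μ _),
    integral_const, probReal_univ, one_smul, integral_sum_mul_mul_div_sum_sq μ _ _ hiso,
    trace_transpose_mul_self, ← frobNorm_sq]
  ring

open MeasureTheory in
theorem random_broyden_progress_expectation {n : ℕ} (hn : 1 ≤ n)
    (A B : Matrix (Fin n) (Fin n) ℝ)
    (μ : Measure (Fin n → ℝ)) [IsProbabilityMeasure μ] (h0 : μ {0} = 0)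
    (hiso : ∀ i j : Fin n,
      (∫ u : Fin n → ℝ, (u i * u j) / (∑ k, u k ^ 2) ∂μ)
        = if i = j then 1 / (n : ℝ) else 0) :
    (∫ u : Fin n → ℝ, frobNorm (broyd B A u - A) ^ 2 ∂μ)
      = (1 - 1 / (n : ℝ)) * frobNorm (B - A) ^ 2 :=
  random_broyden_progress_expectation_general A B μ hiso
end

section
/- Let n ≥ 2 be an integer. Let F : ℝⁿ → ℝⁿ be differentiable everywhere with Jacobian J(x), let x* ∈ ℝⁿ satisfy F(x*) = 0 with J* := J(x*) invertible and c := ‖J*⁻¹‖, and suppose ‖J(x) − J(x*)‖ ≤ M‖x − x*‖ for all x ∈ ℝⁿ, where M > 0. Let x_k ∈ ℝⁿ, B_k ∈ ℝ^{n×n} be sequences such that each B_k is invertible, x_{k+1} = x_k − B_k⁻¹F(x_k), and B_{k+1} = Broyd(B_k, J(x_{k+1}), u_k) for some nonzero vectors u_k ∈ ℝⁿ. Write σ_k := ‖B_k − J(x_k)‖_F and r_k := ‖x_k − x*‖. Let q ∈ (0,1) satisfy cσ₀ ≤ q/(q+1) and √n c M r₀ ≤ (q(1−q)/12)·(q/(1+q)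 − cσ₀). Then for all k ≥ 0: c²σ_k² ≤ c²σ₀² + ((1+q)/(1−q))(2c√n M r₀ + n c² M² r₀²) ≤ q²/(1+q)², and r_{k+1} ≤ q r_k. -/
open Matrix

/-!
Write `σ_k = ‖B_k - J(x_k)‖_F`, `r_k = ‖x_k - x*‖` and `t = √n c M r₀`.
Broyden's update replaces every row of `B_k - J(x_{k+1})` by its orthogonal projection onto `u_kᗮ`,
so it cannot increase the Frobenius norm, and the Lipschitz bound on `J` gives
`σ_{k+1} ≤ σ_k + √n M (r_k + r_{k+1})`. While `c σ_k` stays below `q/(1+q)` by a margin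
proportional to `t`, Banach's perturbation lemma bounds `‖B_k⁻¹‖` and the quasi-Newton step
contracts: `r_{k+1} ≤ q r_k`. The two estimates are closed into an induction by the Lyapunov
function `(c σ_k)² + q^k K₁ + q^{2k} K₂`, `K₁ = 2t (1+q)/(1-q)`, `K₂ = t² (1+q)/(1-q)`, which does
not increase along the iteration.
-/

open WithLp

lemma norm_sub_inner_div_smul_le {E : Type*} [NormedAddCommGroup E] [InnerProductSpace ℝ E]
    [CompleteSpace E] (v w : E) : ‖w - (inner ℝ v w / ‖v‖ ^ 2) • v‖ ≤ ‖w‖ := by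
  simpa [Submodule.starProjection_singleton] using (ℝ ∙ v)ᗮ.norm_starProjection_apply_le w

lemma norm_image_sub_sub_le_of_lipschitz_fderiv {E F : Type*} [NormedAddCommGroup E]
    [NormedSpace ℝ E] [NormedAddCommGroup F] [NormedSpace ℝ F] {f : E → F} {f' : E → E →L[ℝ] F}
    {x₀ : E} {M : ℝ} (hf : ∀ x, HasFDerivAt f (f' x) x) (hM : 0 ≤ M)
    (hlip : ∀ x, ‖f' x - f' x₀‖ ≤ M * ‖x - x₀‖) (y : E) :
    ‖f y - f x₀ - f' x₀ (y - x₀)‖ ≤ M * ‖y - x₀‖ ^ 2 := by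
  have bound : ∀ z ∈ segment ℝ x₀ y, ‖f' z - f' x₀‖ ≤ M * ‖y - x₀‖ := fun z hz =>
    (hlip z).trans (mul_le_mul_of_nonneg_left (norm_sub_le_of_mem_segment hz) hM)
  have := (convex_segment x₀ y).norm_image_sub_le_of_norm_hasFDerivWithin_le'
    (fun z _ => (hf z).hasFDerivWithinAt) bound (left_mem_segment ℝ x₀ y) (right_mem_segment ℝ x₀ y)
  rwa [mul_assoc, ← sq] at this

lemma norm_le_of_mul_eq_one {R : Type*} [SeminormedRing R] {b b' j j' : R} (hb : b' * b = 1)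
    (hj : j * j' = 1) : ‖b'‖ ≤ ‖j'‖ + ‖b'‖ * ‖b - j‖ * ‖j'‖ := by
  have : b' = j' - b' * (b - j) * j' := by
    rw [mul_sub, sub_mul, hb, mul_assoc, hj, one_mul, mul_one, sub_sub_cancel]
  calc ‖b'‖ = ‖j' - b' * (b - j) * j'‖ := congrArg _ this
    _ ≤ ‖j'‖ + ‖b' * (b - j) * j'‖ := norm_sub_le _ _
    _ ≤ ‖j'‖ + ‖b'‖ * ‖b - j‖ * ‖j'‖ := by gcongr; exact norm_mul₃_le

variable {n : ℕ}

lemma vecNorm_eq_norm (u : Fin n → ℝ) : vecNorm u = ‖toLp 2 u‖ := by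
  simp [vecNorm, EuclideanSpace.norm_eq]

lemma vecNorm_nonneg (u : Fin n → ℝ) : 0 ≤ vecNorm u := Real.sqrt_nonneg _

lemma vecNorm_add_le (u v : Fin n → ℝ) : vecNorm (u + v) ≤ vecNorm u + vecNorm v := by
  simpa only [vecNorm_eq_norm, toLp_add] using norm_add_le _ _

lemma vecNorm_sub_le (u v : Fin n → ℝ) : vecNorm (u - v) ≤ vecNorm u + vecNorm v := by
  simpa only [vecNorm_eq_norm, toLp_sub] using norm_sub_le _ _

lemma specNorm_eq_norm (A : Matrix (Fin n) (Fin n) ℝ) :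
    specNorm A = ‖Matrix.toEuclideanCLM (𝕜 := ℝ) A‖ := by
  rw [← ContinuousLinearMap.sSup_sphere_eq_norm]
  unfold specNorm
  congr 1
  ext r
  simp only [Set.mem_ofPred_eq, Set.mem_image, mem_sphere_iff_norm, sub_zero, vecNorm_eq_norm]
  constructor
  · rintro ⟨u, hu, rfl⟩
    exact ⟨toLp 2 u, hu, rfl⟩
  · rintro ⟨v, hv, rfl⟩
    exact ⟨ofLp v, hv, rfl⟩

lemma specNorm_nonneg (A : Matrix (Fin n) (Fin n) ℝ) : 0 ≤ specNorm A :=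
  (specNorm_eq_norm A).symm ▸ norm_nonneg _

lemma vecNorm_mulVec_le (A : Matrix (Fin n) (Fin n) ℝ) (u : Fin n → ℝ) :
    vecNorm (A *ᵥ u) ≤ specNorm A * vecNorm u := by
  rw [specNorm_eq_norm, vecNorm_eq_norm, vecNorm_eq_norm]
  exact (Matrix.toEuclideanCLM (n := Fin n) (𝕜 := ℝ) A).le_opNorm (toLp 2 u)

lemma specNorm_add_le (A B : Matrix (Fin n) (Fin n) ℝ) :
    specNorm (A + B) ≤ specNorm A + specNorm B := by
  simpa only [specNorm_eq_norm, map_add] using norm_add_le _ _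

lemma specNorm_sub_le (A B : Matrix (Fin n) (Fin n) ℝ) :
    specNorm (A - B) ≤ specNorm A + specNorm B := by
  simpa only [specNorm_eq_norm, map_sub] using norm_sub_le _ _

lemma specNorm_inv_le {B J : Matrix (Fin n) (Fin n) ℝ} (hB : IsUnit B) (hJ : IsUnit J) :
    specNorm B⁻¹ ≤ specNorm J⁻¹ + specNorm B⁻¹ * specNorm (B - J) * specNorm J⁻¹ := by
  simp only [specNorm_eq_norm, map_sub]
  refine norm_le_of_mul_eq_one ?_ ?_
  · rw [← map_mul, B.nonsing_inv_mul ((B.isUnit_iff_isUnit_det).1 hB), map_one]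
  · rw [← map_mul, J.mul_nonsing_inv ((J.isUnit_iff_isUnit_det).1 hJ), map_one]

lemma frobNorm_nonneg (A : Matrix (Fin n) (Fin n) ℝ) : 0 ≤ frobNorm A := Real.sqrt_nonneg _

lemma frobNorm_eq_sqrt_sum_vecNorm_sq (A : Matrix (Fin n) (Fin n) ℝ) :
    frobNorm A = √(∑ i, vecNorm (A i) ^ 2) := by
  simp only [frobNorm, vecNorm, Real.sq_sqrt (Finset.sum_nonneg fun _ _ => sq_nonneg _)]

section Frobenius

attribute [local instance] Matrix.frobeniusNormedAddCommGroup

lemma frobNorm_eq_norm (A : Matrix (Fin n) (Fin n) ℝ) : frobNorm A = ‖A‖ := by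
  simp [frobNorm, Matrix.frobenius_norm_def, Real.sqrt_eq_rpow]

lemma frobNorm_add_le (A B : Matrix (Fin n) (Fin n) ℝ) :
    frobNorm (A + B) ≤ frobNorm A + frobNorm B := by
  simpa only [frobNorm_eq_norm] using norm_add_le A B

lemma frobNorm_transpose (A : Matrix (Fin n) (Fin n) ℝ) : frobNorm Aᵀ = frobNorm A := by
  simpa only [frobNorm_eq_norm] using Matrix.frobenius_norm_transpose A

lemma vecNorm_mulVec_le_frobNorm_mul (A : Matrix (Fin n) (Fin n) ℝ) (u : Fin n → ℝ) :
    vecNorm (A *ᵥ u) ≤ frobNorm A * vecNorm u := by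
  simpa only [vecNorm_eq_norm, frobNorm_eq_norm, ← Matrix.frobenius_norm_replicateCol (ι := Unit),
    Matrix.replicateCol_mulVec] using Matrix.frobenius_norm_mul A (Matrix.replicateCol Unit u)

end Frobenius

lemma specNorm_le_frobNorm (A : Matrix (Fin n) (Fin n) ℝ) : specNorm A ≤ frobNorm A := by
  rw [specNorm_eq_norm]
  refine (Matrix.toEuclideanCLM (n := Fin n) (𝕜 := ℝ) A).opNorm_le_bound (frobNorm_nonneg A)
    fun v => ?_
  have h := vecNorm_mulVec_le_frobNorm_mul A (ofLp v)
  rwa [vecNorm_eq_norm, vecNorm_eq_norm] at h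

lemma frobNorm_le_sqrt_mul_specNorm (A : Matrix (Fin n) (Fin n) ℝ) :
    frobNorm A ≤ √n * specNorm A := by
  have hcol : ∀ j, vecNorm (Aᵀ j) ≤ specNorm A := fun j => by
    have h1 : vecNorm (Pi.single j (1 : ℝ)) = 1 := by simp [vecNorm_eq_norm]
    have h := vecNorm_mulVec_le A (Pi.single j 1)
    rwa [h1, mul_one, Matrix.mulVec_single_one] at h
  calc frobNorm A = √(∑ j, vecNorm (Aᵀ j) ^ 2) := by
        rw [← frobNorm_transpose, frobNorm_eq_sqrt_sum_vecNorm_sq]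
    _ ≤ √(∑ _j : Fin n, specNorm A ^ 2) := by
        gcongr with j
        · exact Real.sqrt_nonneg _
        · exact hcol j
    _ = √n * specNorm A := by
        rw [Finset.sum_const, Finset.card_univ, Fintype.card_fin, nsmul_eq_mul,
          Real.sqrt_mul (Nat.cast_nonneg _), Real.sqrt_sq (specNorm_nonneg A)]

lemma vecNorm_sub_dotProduct_div_smul_le (u w : Fin n → ℝ) :
    vecNorm (w - ((w ⬝ᵥ u) / vecNorm u ^ 2) • u) ≤ vecNorm w := by
  simpa [vecNorm_eq_norm, EuclideanSpace.inner_eq_star_dotProduct] using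
    norm_sub_inner_div_smul_le (toLp 2 u) (toLp 2 w)

lemma broyd_sub_row (B A : Matrix (Fin n) (Fin n) ℝ) (u : Fin n → ℝ) (i : Fin n) :
    (broyd B A u - A) i = (B - A) i - (((B - A) i ⬝ᵥ u) / vecNorm u ^ 2) • u := by
  rw [vecNorm, Real.sq_sqrt (Finset.sum_nonneg fun _ _ => sq_nonneg _), broyd, ← neg_sub B A]
  ext j
  simp only [Matrix.sub_apply, Matrix.add_apply, Matrix.smul_apply, Matrix.neg_mul,
    Matrix.neg_apply, Matrix.mul_apply_eq_vecMul, Matrix.vecMul_vecMulVec, Pi.sub_apply,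
    Pi.smul_apply, smul_eq_mul]
  ring

lemma frobNorm_broyd_sub_le (B A : Matrix (Fin n) (Fin n) ℝ) (u : Fin n → ℝ) :
    frobNorm (broyd B A u - A) ≤ frobNorm (B - A) := by
  rw [frobNorm_eq_sqrt_sum_vecNorm_sq, frobNorm_eq_sqrt_sum_vecNorm_sq]
  gcongr with i
  · exact Real.sqrt_nonneg _
  · rw [broyd_sub_row]
    exact vecNorm_sub_dotProduct_div_smul_le u _

section QuasiNewton

variable {F : (Fin n → ℝ) → (Fin n → ℝ)} {J : (Fin n → ℝ) → Matrix (Fin n) (Fin n) ℝ}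
  {xs : Fin n → ℝ} {M : ℝ}

lemma hasFDerivAt_toLp_comp (hF : ∀ x, HasFDerivAt F (matCLM (J x)) x)
    (v : EuclideanSpace ℝ (Fin n)) :
    HasFDerivAt (fun v => toLp 2 (F (ofLp v))) (Matrix.toEuclideanCLM (𝕜 := ℝ) (J (ofLp v))) v :=
  (EuclideanSpace.equiv (Fin n) ℝ).symm.hasFDerivAt.comp v
    ((hF (ofLp v)).comp v (EuclideanSpace.equiv (Fin n) ℝ).hasFDerivAt)

lemma vecNorm_sub_sub_mulVec_le (hF : ∀ x, HasFDerivAt F (matCLM (J x)) x) (hM : 0 ≤ M)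
    (hLip : ∀ x, specNorm (J x - J xs) ≤ M * vecNorm (x - xs)) (y : Fin n → ℝ) :
    vecNorm (F y - F xs - J xs *ᵥ (y - xs)) ≤ M * vecNorm (y - xs) ^ 2 := by
  have hlip : ∀ v : EuclideanSpace ℝ (Fin n), ‖Matrix.toEuclideanCLM (𝕜 := ℝ) (J (ofLp v)) -
      Matrix.toEuclideanCLM (𝕜 := ℝ) (J xs)‖ ≤ M * ‖v - toLp 2 xs‖ := fun v => by
    simpa only [← map_sub, ← specNorm_eq_norm, vecNorm_eq_norm, toLp_sub, toLp_ofLp] using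
      hLip (ofLp v)
  simpa only [vecNorm_eq_norm, toLp_sub, map_sub, Matrix.mulVec_sub,
    Matrix.toEuclideanCLM_toLp] using
    norm_image_sub_sub_le_of_lipschitz_fderiv (hasFDerivAt_toLp_comp hF) hM hlip (toLp 2 y)

lemma vecNorm_quasiNewton_step_sub_le (hF : ∀ x, HasFDerivAt F (matCLM (J x)) x)
    (hxs : F xs = 0) (hM : 0 ≤ M) (hLip : ∀ x, specNorm (J x - J xs) ≤ M * vecNorm (x - xs))
    {B : Matrix (Fin n) (Fin n) ℝ} (hB : IsUnit B) (x : Fin n → ℝ) :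
    vecNorm (x - B⁻¹ *ᵥ F x - xs) ≤
      specNorm B⁻¹ * (frobNorm (B - J x) + 2 * M * vecNorm (x - xs)) * vecNorm (x - xs) := by
  set e := x - xs
  have hid : x - B⁻¹ *ᵥ F x - xs =
      B⁻¹ *ᵥ ((B - J x) *ᵥ e + (J x - J xs) *ᵥ e - (F x - F xs - J xs *ᵥ e)) := by
    have hinner : (B - J x) *ᵥ e + (J x - J xs) *ᵥ e - (F x - F xs - J xs *ᵥ e) = B *ᵥ e - F x := by
      rw [hxs]; simp only [Matrix.sub_mulVec]; abel
    rw [hinner, Matrix.mulVec_sub, Matrix.mulVec_mulVec,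
      B.nonsing_inv_mul ((B.isUnit_iff_isUnit_det).1 hB), Matrix.one_mulVec, sub_right_comm]
  have h1 : vecNorm ((B - J x) *ᵥ e) ≤ frobNorm (B - J x) * vecNorm e :=
    vecNorm_mulVec_le_frobNorm_mul _ _
  have h2 : vecNorm ((J x - J xs) *ᵥ e) ≤ M * vecNorm e * vecNorm e :=
    (vecNorm_mulVec_le _ _).trans (by gcongr; exacts [vecNorm_nonneg _, hLip x])
  have h3 := vecNorm_sub_sub_mulVec_le hF hM hLip x
  calc vecNorm (x - B⁻¹ *ᵥ F x - xs) ≤ specNorm B⁻¹ *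
        vecNorm ((B - J x) *ᵥ e + (J x - J xs) *ᵥ e - (F x - F xs - J xs *ᵥ e)) :=
        hid ▸ vecNorm_mulVec_le _ _
    _ ≤ specNorm B⁻¹ * (frobNorm (B - J x) * vecNorm e + M * vecNorm e * vecNorm e +
        M * vecNorm e ^ 2) := by
        gcongr
        · exact specNorm_nonneg _
        · have := vecNorm_add_le ((B - J x) *ᵥ e) ((J x - J xs) *ᵥ e)
          exact (vecNorm_sub_le _ _).trans (by linarith)
    _ = specNorm B⁻¹ * (frobNorm (B - J x) + 2 * M * vecNorm e) * vecNorm e := by ring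

lemma vecNorm_quasiNewton_step_sub_le_mul (hF : ∀ x, HasFDerivAt F (matCLM (J x)) x)
    (hxs : F xs = 0) (hJs : IsUnit (J xs)) (hM : 0 ≤ M)
    (hLip : ∀ x, specNorm (J x - J xs) ≤ M * vecNorm (x - xs))
    {B : Matrix (Fin n) (Fin n) ℝ} (hB : IsUnit B) {x : Fin n → ℝ} {q : ℝ} (hq : 0 ≤ q)
    (h : (1 + q) * (specNorm (J xs)⁻¹ * frobNorm (B - J x)) +
      (2 + q) * (specNorm (J xs)⁻¹ * (M * vecNorm (x - xs))) ≤ q) :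
    vecNorm (x - B⁻¹ *ᵥ F x - xs) ≤ q * vecNorm (x - xs) := by
  set c := specNorm (J xs)⁻¹
  set σ := frobNorm (B - J x)
  set r := vecNorm (x - xs)
  set β := specNorm B⁻¹
  have hc : 0 ≤ c := specNorm_nonneg _
  have hβ : 0 ≤ β := specNorm_nonneg _
  have hσ : 0 ≤ σ := frobNorm_nonneg _
  have hr : 0 ≤ r := vecNorm_nonneg _
  have hmr : 0 ≤ c * (M * r) := mul_nonneg hc (mul_nonneg hM hr)
  have hBJ : specNorm (B - J xs) ≤ σ + M * r := by
    rw [← sub_add_sub_cancel B (J x) (J xs)]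
    linarith [specNorm_add_le (B - J x) (J x - J xs), specNorm_le_frobNorm (B - J x), hLip x]
  have hβc : β * (1 - c * (σ + M * r)) ≤ c := by
    nlinarith [specNorm_inv_le hB hJs, mul_le_mul_of_nonneg_left hBJ (mul_nonneg hβ hc)]
  have hD : 0 < 1 - c * (σ + M * r) := by nlinarith
  have hβq : β * (σ + 2 * M * r) ≤ q := by
    refine le_of_mul_le_mul_right ?_ hD
    nlinarith [mul_le_mul_of_nonneg_right hβc
      (add_nonneg hσ (mul_nonneg (mul_nonneg zero_le_two hM) hr))]
  calc vecNorm (x - B⁻¹ *ᵥ F x - xs) ≤ β * (σ + 2 * M * r) * r :=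
        vecNorm_quasiNewton_step_sub_le hF hxs hM hLip hB x
    _ ≤ q * r := by gcongr

lemma frobNorm_broyd_sub_le_add (hLip : ∀ x, specNorm (J x - J xs) ≤ M * vecNorm (x - xs))
    (B : Matrix (Fin n) (Fin n) ℝ) (x x' u : Fin n → ℝ) :
    frobNorm (broyd B (J x') u - J x') ≤
      frobNorm (B - J x) + √n * M * (vecNorm (x - xs) + vecNorm (x' - xs)) := by
  have hJ : specNorm (J x - J x') ≤ M * vecNorm (x - xs) + M * vecNorm (x' - xs) := by
    rw [← sub_sub_sub_cancel_right (J x) (J x') (J xs)]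
    linarith [specNorm_sub_le (J x - J xs) (J x' - J xs), hLip x, hLip x']
  calc frobNorm (broyd B (J x') u - J x') ≤ frobNorm (B - J x + (J x - J x')) := by
        rw [sub_add_sub_cancel]; exact frobNorm_broyd_sub_le B (J x') u
    _ ≤ frobNorm (B - J x) + √n * specNorm (J x - J x') :=
        (frobNorm_add_le _ _).trans (by gcongr; exact frobNorm_le_sqrt_mul_specNorm _)
    _ ≤ frobNorm (B - J x) + √n * M * (vecNorm (x - xs) + vecNorm (x' - xs)) := by
        rw [mul_assoc, mul_add]; gcongr

end QuasiNewton

/-- The bound on `(c σ_k)²` is `broydenBound q (c σ₀) (√n c M r₀)`. -/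
noncomputable def broydenBound (q s₀ t : ℝ) : ℝ := s₀ ^ 2 + (1 + q) / (1 - q) * (2 * t + t ^ 2)

lemma broyden_slack_le {q t s₀ : ℝ} (hq0 : 0 < q) (hq1 : q < 1) (ht : 0 ≤ t) (hs₀ : 0 ≤ s₀)
    (h : t ≤ q * (1 - q) / 12 * (q / (1 + q) - s₀)) :
    s₀ ≤ q / (1 + q) ∧
      (1 + q) / (1 - q) * (2 * t + t ^ 2) ≤ 25 / 144 * q * (1 + q) * (q / (1 + q) - s₀) := by
  set δ := q / (1 + q) - s₀
  have h1q : 0 < 1 - q := by linarith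
  have hδ : 0 ≤ δ := by
    by_contra! hneg
    nlinarith [mul_pos hq0 h1q]
  have hδ1 : δ ≤ 1 := by
    have : q / (1 + q) ≤ 1 := (div_le_one (by linarith)).2 (by linarith)
    linarith
  have ht12 : t ≤ 1 / 12 := by nlinarith [mul_pos hq0 h1q]
  refine ⟨by linarith, ?_⟩
  have h2t : 2 * t + t ^ 2 ≤ 25 / 12 * t := by nlinarith
  calc (1 + q) / (1 - q) * (2 * t + t ^ 2) ≤ (1 + q) / (1 - q) * (25 / 12 * t) := by gcongr
    _ ≤ (1 + q) / (1 - q) * (25 / 12 * (q * (1 - q) / 12 * δ)) := by gcongr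
    _ = 25 / 144 * q * (1 + q) * δ := by field_simp; ring

lemma broydenBound_le {q t s₀ : ℝ} (hq0 : 0 < q) (hq1 : q < 1) (ht : 0 ≤ t) (hs₀ : 0 ≤ s₀)
    (h : t ≤ q * (1 - q) / 12 * (q / (1 + q) - s₀)) :
    broydenBound q s₀ t ≤ q ^ 2 / (1 + q) ^ 2 := by
  obtain ⟨hs₀a, hK⟩ := broyden_slack_le hq0 hq1 ht hs₀ h
  have ha : q / (1 + q) * (1 + q) = q := div_mul_cancel₀ q (by linarith)
  rw [broydenBound, ← div_pow]
  nlinarith [mul_nonneg (sub_nonneg.2 hs₀a) hs₀, mul_nonneg (sub_nonneg.2 hs₀a) hq0.le]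

lemma broyden_margin_sq_le {q δ : ℝ} (hq0 : 0 < q) (hq1 : q < 1) (hδ : 0 ≤ δ)
    (hδq : (1 + q) * δ ≤ q) :
    (q - (1 + q) * δ) ^ 2 + 25 / 144 * q * (1 + q) ^ 3 * δ
      ≤ (q - (2 + q) * (q * (1 - q) / 12) * δ) ^ 2 := by
  set p := 1 + q
  set ν := (2 + q) * (q * (1 - q) / 12)
  have hν : 0 ≤ ν := by positivity
  have hp : 0 < p := by positivity
  have hgap : 5 * p ^ 2 / 12 ≤ p - ν := by
    simp only [p, ν]; nlinarith [mul_pos hq0 hq0, mul_pos (mul_pos hq0 hq0) hq0]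
  have hgap0 : 0 ≤ p - ν := (by positivity : (0 : ℝ) ≤ 5 * p ^ 2 / 12).trans hgap
  have hgap2 : 25 * p ^ 4 / 144 ≤ (p - ν) ^ 2 := by nlinarith
  have hlin : q * (p - ν) ≤ p * (2 * q - (p + ν) * δ) := by nlinarith
  have hdiff : (q - ν * δ) ^ 2 - (q - p * δ) ^ 2 = (p - ν) * δ * (2 * q - (p + ν) * δ) := by
    ring
  have : p * (25 / 144 * q * p ^ 3 * δ) ≤ p * ((p - ν) * δ * (2 * q - (p + ν) * δ)) := by
    have h3 := mul_le_mul_of_nonneg_left hlin (mul_nonneg hgap0 hδ)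
    have h4 := mul_le_mul_of_nonneg_right hgap2 (mul_nonneg hq0.le hδ)
    nlinarith
  nlinarith

lemma broyden_contraction_condition {q t s₀ s m : ℝ} (hq0 : 0 < q) (hq1 : q < 1) (ht : 0 ≤ t)
    (hs₀ : 0 ≤ s₀) (hs : 0 ≤ s) (h : t ≤ q * (1 - q) / 12 * (q / (1 + q) - s₀))
    (hsK : s ^ 2 ≤ broydenBound q s₀ t) (hm : m ≤ t) :
    (1 + q) * s + (2 + q) * m ≤ q := by
  obtain ⟨hs₀a, hK⟩ := broyden_slack_le hq0 hq1 ht hs₀ h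
  set δ := q / (1 + q) - s₀
  have hδ : (1 + q) * δ = q - (1 + q) * s₀ := by
    simp only [δ]; field_simp
  have hδ0 : 0 ≤ δ := sub_nonneg.2 hs₀a
  have hR0 : 0 ≤ q - (2 + q) * (q * (1 - q) / 12) * δ := by
    nlinarith [mul_nonneg hδ0 hq0.le, mul_nonneg (mul_nonneg hδ0 hq0.le) hq0.le]
  have hR : (1 + q) * s ≤ q - (2 + q) * (q * (1 - q) / 12) * δ := by
    refine (pow_le_pow_iff_left₀ (by positivity) hR0 two_ne_zero).1 ?_
    calc ((1 + q) * s) ^ 2 ≤ (1 + q) ^ 2 * (s₀ ^ 2 + 25 / 144 * q * (1 + q) * δ) := by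
          rw [mul_pow]; gcongr; rw [broydenBound] at hsK; linarith
      _ = (q - (1 + q) * δ) ^ 2 + 25 / 144 * q * (1 + q) ^ 3 * δ := by
          rw [hδ]; ring
      _ ≤ _ := broyden_margin_sq_le hq0 hq1 hδ0 (by nlinarith)
  nlinarith

lemma broyden_lyapunov_step {q t s s' P : ℝ} (hq0 : 0 < q) (hq1 : q < 1) (ht : 0 ≤ t)
    (hP : 0 ≤ P) (hs : s ≤ q / (1 + q)) (hs' : 0 ≤ s') (hss' : s' ≤ s + t * (1 + q) * P) :
    s' ^ 2 + P * q * ((1 + q) / (1 - q) * (2 * t)) + (P * q) ^ 2 * ((1 + q) / (1 - q) * t ^ 2)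
      ≤ s ^ 2 + P * ((1 + q) / (1 - q) * (2 * t)) + P ^ 2 * ((1 + q) / (1 - q) * t ^ 2) := by
  have h1q : 0 < 1 - q := by linarith
  have hcross : s * (t * (1 + q) * P) ≤ q * t * P := by
    calc s * (t * (1 + q) * P) ≤ q / (1 + q) * (t * (1 + q) * P) := by gcongr
      _ = q * t * P := by field_simp
  set K₁ := (1 + q) / (1 - q) * (2 * t)
  set K₂ := (1 + q) / (1 - q) * t ^ 2
  have hK₁ : P * K₁ - P * q * K₁ = P * (1 + q) * (2 * t) := by
    simp only [K₁]; field_simp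
  have hK₂ : P ^ 2 * K₂ - (P * q) ^ 2 * K₂ = P ^ 2 * (1 + q) ^ 2 * t ^ 2 := by
    simp only [K₂]; field_simp; ring
  have hsq : s' ^ 2 ≤ (s + t * (1 + q) * P) ^ 2 := pow_le_pow_left₀ hs' hss' 2
  nlinarith [mul_nonneg ht hP]

lemma broyden_sequence_bounds {q L : ℝ} {s r : ℕ → ℝ} (hq0 : 0 < q) (hq1 : q < 1) (hL : 0 ≤ L)
    (hs0 : ∀ k, 0 ≤ s k) (hr0 : ∀ k, 0 ≤ r k)
    (hinit : L * r 0 ≤ q * (1 - q) / 12 * (q / (1 + q) - s 0))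
    (hs : ∀ k, s (k + 1) ≤ s k + L * (r k + r (k + 1)))
    (hr : ∀ k, s k ^ 2 ≤ broydenBound q (s 0) (L * r 0) → r k ≤ r 0 → r (k + 1) ≤ q * r k)
    (k : ℕ) :
    s k ^ 2 ≤ broydenBound q (s 0) (L * r 0) ∧ r (k + 1) ≤ q * r k := by
  set t := L * r 0
  set K₁ := (1 + q) / (1 - q) * (2 * t)
  set K₂ := (1 + q) / (1 - q) * t ^ 2
  have ht : 0 ≤ t := mul_nonneg hL (hr0 0)
  have h1q : 0 < 1 - q := by linarith
  have hK₁ : 0 ≤ K₁ := by positivity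
  have hK₂ : 0 ≤ K₂ := by positivity
  have hS : broydenBound q (s 0) t = s 0 ^ 2 + K₁ + K₂ := by rw [broydenBound]; ring
  have hqk : ∀ k : ℕ, 0 ≤ q ^ k ∧ q ^ k ≤ 1 := fun k =>
    ⟨pow_nonneg hq0.le k, pow_le_one₀ hq0.le hq1.le⟩
  have consequences : ∀ k, s k ^ 2 + q ^ k * K₁ + (q ^ k) ^ 2 * K₂ ≤ s 0 ^ 2 + K₁ + K₂ →
      r k ≤ q ^ k * r 0 → s k ^ 2 ≤ broydenBound q (s 0) t ∧ r (k + 1) ≤ q * r k := by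
    intro k hΦ hrk
    have hsk : s k ^ 2 ≤ broydenBound q (s 0) t := by
      rw [hS]
      nlinarith [mul_nonneg (hqk k).1 hK₁, mul_nonneg (pow_nonneg (hqk k).1 2) hK₂]
    refine ⟨hsk, hr k hsk ?_⟩
    nlinarith [mul_le_mul_of_nonneg_right (hqk k).2 (hr0 0)]
  have invariant : ∀ k, s k ^ 2 + q ^ k * K₁ + (q ^ k) ^ 2 * K₂ ≤ s 0 ^ 2 + K₁ + K₂ ∧
      r k ≤ q ^ k * r 0 := by
    intro k
    induction k with
    | zero => simp
    | succ k ih =>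
      obtain ⟨hsk, hrk⟩ := consequences k ih.1 ih.2
      have hsq : s k ≤ q / (1 + q) := by
        refine (pow_le_pow_iff_left₀ (hs0 k) (by positivity) two_ne_zero).1 ?_
        rw [div_pow]
        exact hsk.trans (broydenBound_le hq0 hq1 ht (hs0 0) hinit)
      have hsum : r k + r (k + 1) ≤ (1 + q) * q ^ k * r 0 := by
        nlinarith [mul_le_mul_of_nonneg_left ih.2 hq0.le]
      have hs' : s (k + 1) ≤ s k + t * (1 + q) * q ^ k :=
        calc s (k + 1) ≤ s k + L * (r k + r (k + 1)) := hs k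
          _ ≤ s k + L * ((1 + q) * q ^ k * r 0) := by gcongr
          _ = s k + t * (1 + q) * q ^ k := by ring
      constructor
      · rw [pow_succ]
        exact (broyden_lyapunov_step hq0 hq1 ht (hqk k).1 hsq (hs0 (k + 1)) hs').trans ih.1
      · rw [pow_succ]; nlinarith
  exact consequences k (invariant k).1 (invariant k).2

theorem linear_convergence_broyden_general {n : ℕ} (hn : 2 ≤ n)
    (F : (Fin n → ℝ) → (Fin n → ℝ))
    (J : (Fin n → ℝ) → Matrix (Fin n) (Fin n) ℝ)
    (hF : ∀ x, HasFDerivAt F (matCLM (J x)) x)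
    (xs : Fin n → ℝ) (hxs : F xs = 0) (hJs : IsUnit (J xs))
    (c : ℝ) (hc : c = specNorm (J xs)⁻¹)
    (M : ℝ) (hM : 0 < M)
    (hLip : ∀ x, specNorm (J x - J xs) ≤ M * vecNorm (x - xs))
    (x : ℕ → (Fin n → ℝ)) (B : ℕ → Matrix (Fin n) (Fin n) ℝ)
    (u : ℕ → (Fin n → ℝ))
    (hBinv : ∀ k, IsUnit (B k))
    (hxrec : ∀ k, x (k + 1) = x k - (B k)⁻¹.mulVec (F (x k)))
    (hBrec : ∀ k, B (k + 1) = broyd (B k) (J (x (k + 1))) (u k))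
    (q : ℝ) (hq0 : 0 < q) (hq1 : q < 1)
    (hinit2 : Real.sqrt n * c * M * vecNorm (x 0 - xs)
      ≤ q * (1 - q) / 12 * (q / (1 + q) - c * frobNorm (B 0 - J (x 0)))) :
    ∀ k : ℕ,
      (c ^ 2 * frobNorm (B k - J (x k)) ^ 2
          ≤ c ^ 2 * frobNorm (B 0 - J (x 0)) ^ 2
            + (1 + q) / (1 - q) * (2 * c * Real.sqrt n * M * vecNorm (x 0 - xs)
                + n * c ^ 2 * M ^ 2 * vecNorm (x 0 - xs) ^ 2) ∧
        c ^ 2 * frobNorm (B 0 - J (x 0)) ^ 2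
            + (1 + q) / (1 - q) * (2 * c * Real.sqrt n * M * vecNorm (x 0 - xs)
                + n * c ^ 2 * M ^ 2 * vecNorm (x 0 - xs) ^ 2)
          ≤ q ^ 2 / (1 + q) ^ 2) ∧
      vecNorm (x (k + 1) - xs) ≤ q * vecNorm (x k - xs) := by
  intro k
  set s : ℕ → ℝ := fun k => c * frobNorm (B k - J (x k))
  set r : ℕ → ℝ := fun k => vecNorm (x k - xs)
  set L := √n * c * M
  have hc0 : 0 ≤ c := hc ▸ specNorm_nonneg _
  have hs0 : ∀ k, 0 ≤ s k := fun k => mul_nonneg hc0 (frobNorm_nonneg _)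
  have hr0 : ∀ k, 0 ≤ r k := fun k => vecNorm_nonneg _
  have hL : 0 ≤ L := by positivity
  have ht : 0 ≤ L * r 0 := mul_nonneg hL (hr0 0)
  have hs : ∀ k, s (k + 1) ≤ s k + L * (r k + r (k + 1)) := fun k => by
    have := frobNorm_broyd_sub_le_add hLip (B k) (x k) (x (k + 1)) (u k)
    simp only [s, r, L, hBrec k]
    nlinarith [mul_le_mul_of_nonneg_left this hc0]
  have hr : ∀ k, s k ^ 2 ≤ broydenBound q (s 0) (L * r 0) → r k ≤ r 0 →
      r (k + 1) ≤ q * r k := fun k hsk hrk => by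
    have hm : c * (M * r k) ≤ L * r 0 := by
      have hn1 : (1 : ℝ) ≤ √n := Real.one_le_sqrt.2 (by exact_mod_cast (by omega : 1 ≤ n))
      have := mul_le_mul_of_nonneg_left hrk (mul_nonneg hc0 hM.le)
      nlinarith [mul_nonneg (mul_nonneg hc0 hM.le) (hr0 0)]
    simp only [r, hxrec k]
    refine vecNorm_quasiNewton_step_sub_le_mul hF hxs hJs hM.le hLip (hBinv k) hq0.le ?_
    exact hc ▸ broyden_contraction_condition hq0 hq1 ht (hs0 0) (hs0 k) hinit2 hsk hm
  have hS : broydenBound q (s 0) (L * r 0) = c ^ 2 * frobNorm (B 0 - J (x 0)) ^ 2 +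
      (1 + q) / (1 - q) * (2 * c * √n * M * r 0 + n * c ^ 2 * M ^ 2 * r 0 ^ 2) := by
    have hn2 : √(n : ℝ) ^ 2 = n := Real.sq_sqrt (Nat.cast_nonneg n)
    simp only [broydenBound, s, L]
    linear_combination (1 + q) / (1 - q) * c ^ 2 * M ^ 2 * r 0 ^ 2 * hn2
  obtain ⟨hsk, hrk⟩ := broyden_sequence_bounds hq0 hq1 hL hs0 hr0 hinit2 hs hr k
  refine ⟨⟨?_, ?_⟩, hrk⟩
  · rw [← hS, ← mul_pow]; exact hsk
  · rw [← hS]; exact broydenBound_le hq0 hq1 ht (hs0 0) hinit2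

theorem linear_convergence_broyden {n : ℕ} (hn : 2 ≤ n)
    (F : (Fin n → ℝ) → (Fin n → ℝ))
    (J : (Fin n → ℝ) → Matrix (Fin n) (Fin n) ℝ)
    (hF : ∀ x, HasFDerivAt F (matCLM (J x)) x)
    (xs : Fin n → ℝ) (hxs : F xs = 0) (hJs : IsUnit (J xs))
    (c : ℝ) (hc : c = specNorm (J xs)⁻¹)
    (M : ℝ) (hM : 0 < M)
    (hLip : ∀ x, specNorm (J x - J xs) ≤ M * vecNorm (x - xs))
    (x : ℕ → (Fin n → ℝ)) (B : ℕ → Matrix (Fin n) (Fin n) ℝ)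
    (u : ℕ → (Fin n → ℝ)) (hu : ∀ k, u k ≠ 0)
    (hBinv : ∀ k, IsUnit (B k))
    (hxrec : ∀ k, x (k + 1) = x k - (B k)⁻¹.mulVec (F (x k)))
    (hBrec : ∀ k, B (k + 1) = broyd (B k) (J (x (k + 1))) (u k))
    (q : ℝ) (hq0 : 0 < q) (hq1 : q < 1)
    (hinit1 : c * frobNorm (B 0 - J (x 0)) ≤ q / (q + 1))
    (hinit2 : Real.sqrt n * c * M * vecNorm (x 0 - xs)
      ≤ q * (1 - q) / 12 * (q / (1 + q) - c * frobNorm (B 0 - J (x 0)))) :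
    ∀ k : ℕ,
      (c ^ 2 * frobNorm (B k - J (x k)) ^ 2
          ≤ c ^ 2 * frobNorm (B 0 - J (x 0)) ^ 2
            + (1 + q) / (1 - q) * (2 * c * Real.sqrt n * M * vecNorm (x 0 - xs)
                + n * c ^ 2 * M ^ 2 * vecNorm (x 0 - xs) ^ 2) ∧
        c ^ 2 * frobNorm (B 0 - J (x 0)) ^ 2
            + (1 + q) / (1 - q) * (2 * c * Real.sqrt n * M * vecNorm (x 0 - xs)
                + n * c ^ 2 * M ^ 2 * vecNorm (x 0 - xs) ^ 2)
          ≤ q ^ 2 / (1 + q) ^ 2) ∧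
      vecNorm (x (k + 1) - xs) ≤ q * vecNorm (x k - xs) :=
  linear_convergence_broyden_general hn F J hF xs hxs hJs c hc M hM hLip x B u hBinv hxrec hBrec q
    hq0 hq1 hinit2
end
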